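/- arXiv:1404.3120 — 4 statements merged into one kernel-verified Lean document; each statement's English description precedes it below -/
import Mathlib

section
/- Landau–Toeplitz Theorem for slice regular functions (inequality part): Let f(q) = ∑_{n≥0} q^n a_n be a slice regular function on 𝔹 such that d̃₂(f(𝔹)) = 2. Then d̃₂(f(r𝔹)) ≤ 2r for every r ∈ (0,1), and |a₁| ≤ 1 (i.e. |∂_c f(0)| ≤ 1). -/
/-!
Fix `u, v` in the closed unit ball. The difference `f_u - f_v` is a power series `∑ qⁿ cₙ` with
`c₀ = 0`, so it factors as `q · g(q)` with `g` again a power series (`regDiffQuot`), and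
`|q g(q)| ≤ d̃₂(f(s𝔹))` for `|q| ≤ s`. A Schwarz lemma for quaternionic power series gives
`|g| ≤ d̃₂(f(s𝔹)) / s` on `|q| < s`, and letting `s → 1` gives `|g| ≤ 2` on `𝔹`. Hence
`|f_u(q) - f_v(q)| ≤ 2|q|`, which is the first claim, and for `u = 1`, `v = -1` the value
`g(0) = 2a₁` gives `|a₁| ≤ 1`.

The quaternionic Schwarz lemma reduces to the complex one: `q` lies on a slice `ℂ_I = ℝ + ℝI`
with `I² = -1`, and composing `z ↦ g(z)` on that slice with the norm-nonincreasing map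
`y ↦ π_I(y ē)`, `e = g(q)/|g(q)|`, gives a complex power series, because the projection `π_I`
onto `ℂ_I` commutes with left multiplication by `ℂ_I`. Its value at `q` has real part `|g(q)|`.
-/

noncomputable section

open Filter Metric Set

local notation "ℍ" => Quaternion ℝ

/-- The regular composition `f_u(q) = ∑ q^n u^n a_n` of `f(q) = ∑ q^n a_n` with `q ↦ qu`. -/
def regComp (a : ℕ → ℍ) (u q : ℍ) : ℍ := ∑' n : ℕ, q ^ n * u ^ n * a n

/-- The regular diameter `d̃₂(f(r𝔹)) = max_{u,v ∈ 𝔹̄} max_{|q| ≤ r} |f_u(q) - f_v(q)|`. -/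
def regDiam2 (a : ℕ → ℍ) (r : ℝ) : ℝ :=
  sSup {x : ℝ | ∃ u v q : ℍ, ‖u‖ ≤ 1 ∧ ‖v‖ ≤ 1 ∧ ‖q‖ ≤ r ∧
    x = ‖regComp a u q - regComp a v q‖}

open scoped Topology

theorem Summable.norm_mul_pow_of_norm_le {E F : Type*} [SeminormedAddCommGroup E]
    [SeminormedAddCommGroup F] {a : ℕ → E} {b : ℕ → F} {ρ C : ℝ}
    (ha : Summable fun n => ‖a n‖ * ρ ^ n) (hρ : 0 ≤ ρ) (h : ∀ n, ‖b n‖ ≤ C * ‖a n‖) :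
    Summable fun n => ‖b n‖ * ρ ^ n :=
  (ha.mul_left C).of_nonneg_of_le (fun _ => by positivity) fun n => by
    rw [← mul_assoc]; gcongr; exact h n

theorem Summable.succ_mul_pow {c : ℕ → ℝ} {ρ : ℝ} (h : Summable fun n => c n * ρ ^ n) (hρ : ρ ≠ 0) :
    Summable fun n => c (n + 1) * ρ ^ n := by
  have h1 := ((summable_nat_add_iff 1).2 h).div_const ρ
  refine h1.congr fun n => ?_
  rw [pow_succ]; field_simp

theorem differentiableOn_tsum_mul_pow {d : ℕ → ℂ} {s : ℝ} (hd : Summable fun n => ‖d n‖ * s ^ n) :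
    DifferentiableOn ℂ (fun z => ∑' n, d n * z ^ n) (ball 0 s) := by
  refine Complex.differentiableOn_tsum_of_summable_norm hd (fun n => by fun_prop) isOpen_ball
    fun n z hz => ?_
  rw [norm_mul, norm_pow]
  gcongr
  exact (mem_ball_zero_iff.1 hz).le

theorem norm_le_div_of_forall_norm_smul_le {E : Type*} [NormedAddCommGroup E] [NormedSpace ℂ E]
    {H : ℂ → E} {s M : ℝ} (hH : DifferentiableOn ℂ H (ball 0 s))
    (hM : ∀ z ∈ ball (0 : ℂ) s, ‖z • H z‖ ≤ M) {z : ℂ} (hz : z ∈ ball 0 s) : ‖H z‖ ≤ M / s := by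
  -- Schwarz's lemma for `w ↦ w • H w`, whose `dslope` at `0` is `H`.
  have hdiff : DifferentiableOn ℂ (fun w => w • H w) (ball 0 s) := differentiableOn_id.smul hH
  have hmaps : MapsTo (fun w => w • H w) (ball 0 s) (closedBall ((0 : ℂ) • H 0) M) := by
    intro w hw
    simpa using hM w hw
  have hslope : dslope (fun w => w • H w) 0 z = H z := by
    rcases eq_or_ne z 0 with rfl | hz0
    · rw [dslope_same]
      have hH0 : DifferentiableAt ℂ H 0 := hH.differentiableAt (isOpen_ball.mem_nhds hz)
      simpa using ((hasDerivAt_id' (0 : ℂ)).fun_smul hH0.hasDerivAt).deriv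
    · simpa using dslope_sub_smul_of_ne H hz0
  rw [← hslope]
  exact Complex.norm_dslope_le_div_of_mapsTo_ball hdiff hmaps hz

section Slice

variable {I : ℍ}

theorem Quaternion.re_mul_comm (a b : ℍ) : (a * b).re = (b * a).re := by
  simp only [re_mul]; ring

theorem Quaternion.normSq_eq_one_of_mul_self_eq_neg_one (hI : I * I = -1) :
    normSq I = 1 := by
  have h := congrArg normSq hI
  rw [map_mul, normSq_neg, map_one] at h
  nlinarith [normSq_nonneg (a := I)]

theorem Quaternion.re_eq_zero_of_mul_self_eq_neg_one (hI : I * I = -1) : I.re = 0 :=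
  sq_eq_neg_normSq.1 <| by
    rw [sq, hI, normSq_eq_one_of_mul_self_eq_neg_one hI, coe_one]

theorem Quaternion.norm_liftAux (hI : I * I = -1) (z : ℂ) :
    ‖Complex.liftAux I hI z‖ = ‖z‖ := by
  have hre := re_eq_zero_of_mul_self_eq_neg_one hI
  have hn := normSq_eq_one_of_mul_self_eq_neg_one hI
  rw [normSq_def', hre] at hn
  rw [← sq_eq_sq₀ (norm_nonneg _) (norm_nonneg _), sq, ← normSq_eq_norm_mul_self,
    Complex.sq_norm, Complex.normSq_apply, Complex.liftAux_apply, normSq_def']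
  simp [algebraMap_def, hre]
  linear_combination z.im ^ 2 * hn

theorem Quaternion.exists_liftAux_eq (q : ℍ) :
    ∃ (I : ℍ) (hI : I * I = -1) (z : ℂ), Complex.liftAux I hI z = q := by
  by_cases him : q.im = 0
  · refine ⟨ofComplex Complex.I,
      by rw [← map_mul, Complex.I_mul_I, map_neg, map_one], q.re, ?_⟩
    rw [Complex.liftAux_apply]
    conv_rhs => rw [← re_add_im q, him]
    simp [algebraMap_def]
  · have hn : ‖q.im‖ ≠ 0 := norm_ne_zero_iff.2 him
    have hsq : q.im * q.im = -(‖q.im‖ ^ 2 : ℝ) := by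
      rw [← sq, sq_eq_neg_normSq.2 q.re_im, normSq_eq_norm_mul_self, sq]
    refine ⟨‖q.im‖⁻¹ • q.im, ?_, ⟨q.re, ‖q.im‖⟩, ?_⟩
    · rw [smul_mul_smul_comm, hsq, smul_neg, smul_coe, ← coe_one]
      congr 2
      field_simp
    · rw [Complex.liftAux_apply, smul_smul, mul_inv_cancel₀ hn, one_smul, algebraMap_def,
        re_add_im]

/-- The projection of `ℍ = ℂ_I ⊕ ℂ_I J` onto the slice `ℂ_I`, read in the coordinates `1, I`. -/
def sliceProj (I : ℍ) : ℍ →L[ℝ] ℂ :=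
  LinearMap.toContinuousLinearMap
    { toFun := fun y => ⟨y.re, (y * star I).re⟩
      map_add' := fun x y => by apply Complex.ext <;> simp [add_mul]
      map_smul' := fun r x => by apply Complex.ext <;> simp }

theorem sliceProj_apply (y : ℍ) : sliceProj I y = ⟨y.re, (y * star I).re⟩ := rfl

theorem sliceProj_liftAux_mul (hI : I * I = -1) (z : ℂ) (y : ℍ) :
    sliceProj I (Complex.liftAux I hI z * y) = z * sliceProj I y := by
  have hstar : star I = -I :=
    Quaternion.star_eq_neg.2 (Quaternion.re_eq_zero_of_mul_self_eq_neg_one hI)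
  have hIy : sliceProj I (I * y) = Complex.I * sliceProj I y := by
    apply Complex.ext
    · simp [sliceProj_apply, hstar, Quaternion.re_mul_comm I y]
    · simp [sliceProj_apply, hstar, Quaternion.re_mul_comm I, mul_assoc, hI]
  rw [Complex.liftAux_apply, add_mul, smul_mul_assoc, ← Algebra.smul_def, map_add, map_smul,
    map_smul, hIy]
  conv_rhs => rw [← Complex.re_add_im z]
  simp only [Complex.real_smul]
  ring

theorem norm_sliceProj_le (hI : I * I = -1) (y : ℍ) : ‖sliceProj I y‖ ≤ ‖y‖ := by
  have hre := Quaternion.re_eq_zero_of_mul_self_eq_neg_one hI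
  have hn := Quaternion.normSq_eq_one_of_mul_self_eq_neg_one hI
  rw [Quaternion.normSq_def', hre] at hn
  rw [← sq_le_sq₀ (norm_nonneg _) (norm_nonneg _), sq ‖y‖, ← Quaternion.normSq_eq_norm_mul_self,
    Complex.sq_norm, Complex.normSq_apply, sliceProj_apply, Quaternion.normSq_def']
  simp only [Quaternion.re_mul, Quaternion.re_star, Quaternion.imI_star, Quaternion.imJ_star,
    Quaternion.imK_star, hre]
  -- Cauchy–Schwarz for the imaginary parts of `y` and of the unit vector `I`.
  nlinarith [sq_nonneg (y.imI * I.imJ - y.imJ * I.imI), sq_nonneg (y.imI * I.imK - y.imK * I.imI),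
    sq_nonneg (y.imJ * I.imK - y.imK * I.imJ)]

end Slice

def regSeries (b : ℕ → ℍ) (q : ℍ) : ℍ := ∑' n, q ^ n * b n

section RegSeries

variable {b : ℕ → ℍ} {ρ : ℝ} {q : ℍ}

theorem summable_norm_regSeries (hb : Summable fun n => ‖b n‖ * ρ ^ n) (hq : ‖q‖ ≤ ρ) :
    Summable fun n => ‖q ^ n * b n‖ :=
  hb.of_nonneg_of_le (fun _ => norm_nonneg _) fun n => by
    rw [norm_mul, norm_pow, mul_comm]; gcongr

theorem norm_regSeries_le (hb : Summable fun n => ‖b n‖ * ρ ^ n) (hq : ‖q‖ ≤ ρ) :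
    ‖regSeries b q‖ ≤ ∑' n, ‖b n‖ * ρ ^ n :=
  (norm_tsum_le_tsum_norm (summable_norm_regSeries hb hq)).trans <|
    (summable_norm_regSeries hb hq).tsum_le_tsum (fun n => by
      rw [norm_mul, norm_pow, mul_comm]; gcongr) hb

theorem regSeries_zero (b : ℕ → ℍ) : regSeries b 0 = b 0 := by
  rw [regSeries, tsum_eq_single 0 fun n hn => by simp [hn]]
  simp

theorem regSeries_eq_mul_regSeries_succ (hb : Summable fun n => ‖b n‖ * ρ ^ n) (hq : ‖q‖ ≤ ρ)
    (hb0 : b 0 = 0) : regSeries b q = q * regSeries (fun n => b (n + 1)) q := by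
  rw [regSeries, (summable_norm_regSeries hb hq).of_norm.tsum_eq_zero_add, regSeries,
    ← tsum_mul_left]
  simp [hb0, pow_succ', mul_assoc]

theorem hasSum_sliceProj_regSeries (hI : I * I = -1) (e : ℍ)
    (hb : Summable fun n => ‖b n‖ * ρ ^ n) {z : ℂ} (hz : ‖z‖ ≤ ρ) :
    HasSum (fun n => sliceProj I (b n * e) * z ^ n)
      (sliceProj I (regSeries b (Complex.liftAux I hI z) * e)) := by
  have hs : HasSum _ (regSeries b (Complex.liftAux I hI z)) :=
    (summable_norm_regSeries hb ((Quaternion.norm_liftAux hI z).trans_le hz)).of_norm.hasSum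
  convert (hs.mul_right e).mapL (sliceProj I) using 1
  funext n
  rw [← map_pow, mul_assoc, sliceProj_liftAux_mul, mul_comm]

end RegSeries

theorem norm_regSeries_le_div {b : ℕ → ℍ} {s M : ℝ} (hb : Summable fun n => ‖b n‖ * s ^ n)
    (hM : ∀ w : ℍ, ‖w‖ < s → ‖w * regSeries b w‖ ≤ M) {q : ℍ} (hq : ‖q‖ < s) :
    ‖regSeries b q‖ ≤ M / s := by
  obtain ⟨I, hI, z₀, rfl⟩ := Quaternion.exists_liftAux_eq q
  set L := Complex.liftAux I hI
  set x := regSeries b (L z₀)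
  set e : ℍ := ‖x‖⁻¹ • x
  have he : ‖star e‖ ≤ 1 := by
    rw [norm_star, norm_smul, norm_inv, norm_norm]
    exact inv_mul_le_one_of_le₀ le_rfl (norm_nonneg _)
  set H : ℂ → ℂ := fun z => sliceProj I (regSeries b (L z) * star e)
  have hH : EqOn H (fun z => ∑' n, sliceProj I (b n * star e) * z ^ n) (ball 0 s) :=
    fun z hz => ((hasSum_sliceProj_regSeries hI _ hb (mem_ball_zero_iff.1 hz).le).tsum_eq).symm
  have hd : Summable fun n => ‖sliceProj I (b n * star e)‖ * s ^ n := by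
    have hs0 : 0 ≤ s := (norm_nonneg _).trans hq.le
    refine hb.of_nonneg_of_le (fun _ => by positivity) fun n => ?_
    gcongr
    calc ‖sliceProj I (b n * star e)‖ ≤ ‖b n‖ * ‖star e‖ :=
          (norm_sliceProj_le hI _).trans (norm_mul_le _ _)
      _ ≤ ‖b n‖ := mul_le_of_le_one_right (norm_nonneg _) he
  have hdiff : DifferentiableOn ℂ H (ball 0 s) :=
    (differentiableOn_tsum_mul_pow hd).congr hH
  have hzM : ∀ z ∈ ball (0 : ℂ) s, ‖z • H z‖ ≤ M := by
    intro z hz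
    have hz' : ‖L z‖ < s := by rw [Quaternion.norm_liftAux]; exact mem_ball_zero_iff.1 hz
    calc ‖z • H z‖ = ‖sliceProj I (L z * regSeries b (L z) * star e)‖ := by
          rw [smul_eq_mul, mul_assoc, sliceProj_liftAux_mul]
      _ ≤ ‖L z * regSeries b (L z)‖ * ‖star e‖ := (norm_sliceProj_le hI _).trans (norm_mul_le _ _)
      _ ≤ M := by nlinarith [hM _ hz', norm_nonneg (L z * regSeries b (L z)), norm_nonneg (star e)]
  have hx : ‖x‖ = (H z₀).re := by
    change ‖x‖ = (x * star e).re
    rw [← Quaternion.inner_def, real_inner_smul_right, real_inner_self_eq_norm_sq,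
      sq, ← mul_assoc, inv_mul_mul_self]
  calc ‖x‖ = (H z₀).re := hx
    _ ≤ ‖H z₀‖ := Complex.re_le_norm _
    _ ≤ M / s := norm_le_div_of_forall_norm_smul_le hdiff hzM
        (mem_ball_zero_iff.2 (by rwa [← Quaternion.norm_liftAux hI]))

def regDiffCoeff (a : ℕ → ℍ) (u v : ℍ) (n : ℕ) : ℍ := (u ^ n - v ^ n) * a n

def regDiffQuot (a : ℕ → ℍ) (u v q : ℍ) : ℍ := regSeries (fun n => regDiffCoeff a u v (n + 1)) q

section RegularComposition

variable {a : ℕ → ℍ} {u v q : ℍ} {ρ s : ℝ}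

theorem regComp_eq_regSeries : regComp a u q = regSeries (fun n => u ^ n * a n) q := by
  simp only [regComp, regSeries, mul_assoc]

theorem norm_pow_mul_le (hu : ‖u‖ ≤ 1) (n : ℕ) : ‖u ^ n * a n‖ ≤ ‖a n‖ := by
  rw [norm_mul, norm_pow]
  exact mul_le_of_le_one_left (norm_nonneg _) (pow_le_one₀ (norm_nonneg u) hu)

theorem norm_regDiffCoeff_le (hu : ‖u‖ ≤ 1) (hv : ‖v‖ ≤ 1) (n : ℕ) :
    ‖regDiffCoeff a u v n‖ ≤ 2 * ‖a n‖ := by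
  rw [regDiffCoeff, sub_mul]
  linarith [norm_sub_le (u ^ n * a n) (v ^ n * a n), norm_pow_mul_le (a := a) hu n,
    norm_pow_mul_le (a := a) hv n]

variable (hconv : ∀ ρ : ℝ, 0 ≤ ρ → ρ < 1 → Summable fun n : ℕ => ‖a n‖ * ρ ^ n)
include hconv

theorem regComp_sub_regComp (hu : ‖u‖ ≤ 1) (hv : ‖v‖ ≤ 1) (hq : ‖q‖ < 1) :
    regComp a u q - regComp a v q = regSeries (regDiffCoeff a u v) q := by
  have hsum : ∀ w : ℍ, ‖w‖ ≤ 1 → Summable fun n => q ^ n * (w ^ n * a n) := fun w hw =>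
    (summable_norm_regSeries ((hconv _ (norm_nonneg q) hq).norm_mul_pow_of_norm_le (norm_nonneg q)
      fun n => (norm_pow_mul_le hw n).trans_eq (one_mul _).symm) le_rfl).of_norm
  rw [regComp_eq_regSeries, regComp_eq_regSeries, regSeries, regSeries,
    ← (hsum u hu).tsum_sub (hsum v hv), regSeries]
  simp only [regDiffCoeff, sub_mul, mul_sub]

theorem norm_regComp_sub_le_regDiam2 (hu : ‖u‖ ≤ 1) (hv : ‖v‖ ≤ 1) (hq : ‖q‖ ≤ s) (hs : s < 1) :
    ‖regComp a u q - regComp a v q‖ ≤ regDiam2 a s := by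
  have hs0 : 0 ≤ s := (norm_nonneg q).trans hq
  refine le_csSup ⟨2 * ∑' n, ‖a n‖ * s ^ n, ?_⟩ ⟨u, v, q, hu, hv, hq, rfl⟩
  rintro _ ⟨u', v', q', hu', hv', hq', rfl⟩
  have hc := (hconv s hs0 hs).norm_mul_pow_of_norm_le hs0 (norm_regDiffCoeff_le hu' hv')
  rw [regComp_sub_regComp hconv hu' hv' (hq'.trans_lt hs), ← tsum_mul_left]
  refine (norm_regSeries_le hc hq').trans
    (hc.tsum_le_tsum (fun n => ?_) ((hconv s hs0 hs).mul_left 2))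
  rw [← mul_assoc]; gcongr; exact norm_regDiffCoeff_le hu' hv' n

theorem regComp_sub_regComp_eq_mul (hu : ‖u‖ ≤ 1) (hv : ‖v‖ ≤ 1) (hq : ‖q‖ < 1) :
    regComp a u q - regComp a v q = q * regDiffQuot a u v q := by
  rw [regComp_sub_regComp hconv hu hv hq, regDiffQuot]
  exact regSeries_eq_mul_regSeries_succ ((hconv _ (norm_nonneg q) hq).norm_mul_pow_of_norm_le
    (norm_nonneg q) (norm_regDiffCoeff_le hu hv)) le_rfl (by simp [regDiffCoeff])

theorem norm_regDiffQuot_le_div (hu : ‖u‖ ≤ 1) (hv : ‖v‖ ≤ 1) (hq : ‖q‖ < s) (hs : s < 1) :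
    ‖regDiffQuot a u v q‖ ≤ regDiam2 a s / s := by
  have hs0 : 0 < s := (norm_nonneg q).trans_lt hq
  refine norm_regSeries_le_div ?_ (fun w hw => ?_) hq
  · exact ((hconv s hs0.le hs).norm_mul_pow_of_norm_le hs0.le
      (norm_regDiffCoeff_le hu hv)).succ_mul_pow hs0.ne'
  · rw [← regDiffQuot, ← regComp_sub_regComp_eq_mul hconv hu hv (hw.trans hs)]
    exact norm_regComp_sub_le_regDiam2 hconv hu hv hw.le hs

theorem norm_regDiffQuot_le_of_tendsto {D : ℝ} (hD : Tendsto (regDiam2 a) (𝓝[<] 1) (𝓝 D))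
    (hu : ‖u‖ ≤ 1) (hv : ‖v‖ ≤ 1) (hq : ‖q‖ < 1) : ‖regDiffQuot a u v q‖ ≤ D := by
  have hlim : Tendsto (fun s => regDiam2 a s / s) (𝓝[<] 1) (𝓝 D) := by
    have h := hD.div (tendsto_id.mono_left nhdsWithin_le_nhds) one_ne_zero
    rwa [div_one] at h
  refine ge_of_tendsto hlim ?_
  filter_upwards [Ioo_mem_nhdsLT hq] with s hs
  exact norm_regDiffQuot_le_div hconv hu hv hs.1 hs.2

end RegularComposition

/-- Landau–Toeplitz theorem for slice regular functions, inequality part. -/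
theorem landau_toeplitz_ineq (a : ℕ → ℍ)
    (hconv : ∀ ρ : ℝ, 0 ≤ ρ → ρ < 1 → Summable fun n : ℕ => ‖a n‖ * ρ ^ n)
    (hd2 : Tendsto (regDiam2 a) (nhdsWithin 1 (Set.Iio 1)) (nhds 2)) :
    (∀ r ∈ Set.Ioo (0 : ℝ) 1, regDiam2 a r ≤ 2 * r) ∧ ‖a 1‖ ≤ 1 := by
  refine ⟨fun r hr => Real.sSup_le ?_ (by linarith [hr.1]), ?_⟩
  · rintro _ ⟨u, v, q, hu, hv, hq, rfl⟩
    rw [regComp_sub_regComp_eq_mul hconv hu hv (hq.trans_lt hr.2), norm_mul, mul_comm]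
    exact mul_le_mul (norm_regDiffQuot_le_of_tendsto hconv hd2 hu hv (hq.trans_lt hr.2)) hq
      (norm_nonneg _) zero_le_two
  · have h := norm_regDiffQuot_le_of_tendsto (u := 1) (v := -1) (q := 0) hconv hd2
      (by simp) (by simp) (by simp)
    have h2 : regDiffQuot a 1 (-1) 0 = (2 : ℝ) • a 1 := by
      rw [regDiffQuot, regSeries_zero, regDiffCoeff, two_smul]
      noncomm_ring
    rw [h2, norm_smul, Real.norm_two] at h
    linarith
end
end

section
/- Let g(q) = ∑_{n≥0} q^n a_n be a slice regular function on 𝔹 such that Im_{I_q}(g(q)) = 0 for every nonreal q ∈ 𝔹. Then g is a real constant function: a₀ ∈ ℝ and a_n = 0 for every n ≥ 1. -/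
/-!
Fix a unit imaginary `I` and restrict `g` to the slice `ℂ_I = ℝ + ℝ I`, a copy of `ℂ`.
At `q = t (cos θ + I sin θ)` with `0 < θ < π` the unit `I_q` is `I` itself, so the hypothesis says
that the real power series `∑ tⁿ (cos (nθ) Re (aₙ I) - sin (nθ) Re aₙ)` vanishes for `0 < t < 1`.
By the identity theorem all its coefficients vanish; `nθ = π/2` and `nθ = π/4` then give
`Re aₙ = Re (aₙ I) = 0` for `n ≥ 1`, and `n = 0` gives `Re (a₀ I) = 0`.
Finally `Re (w I) = -|Im w|` for `I = Im w / |Im w|`, so `Im aₙ = 0` for all `n`.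
-/

noncomputable section

open Filter Set Topology Real
open scoped NNReal

local notation "ℍ" => Quaternion ℝ

theorem eq_zero_of_frequently_tsum_mul_pow_eq_zero {𝕜 : Type*} [NontriviallyNormedField 𝕜]
    [CompleteSpace 𝕜] {c : ℕ → 𝕜} {r : ℝ} (hr : 0 < r) (hc : Summable fun n => ‖c n‖ * r ^ n)
    (h : ∃ᶠ x in 𝓝[≠] 0, ∑' n, c n * x ^ n = 0) : c = 0 := by
  lift r to ℝ≥0 using hr.le
  set p := FormalMultilinearSeries.ofScalars 𝕜 c
  have hp : HasFPowerSeriesAt p.sum p 0 := by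
    have hrad : (r : ENNReal) ≤ p.radius := p.le_radius_of_summable <| by
      simpa [p, FormalMultilinearSeries.ofScalars_norm] using hc
    exact ⟨_, p.hasFPowerSeriesOnBall ((ENNReal.coe_pos.2 hr).trans_le hrad)⟩
  rw [show p.sum = fun x => ∑' n, c n * x ^ n from
    FormalMultilinearSeries.ofScalarsSum_eq_tsum c] at hp
  by_contra hne
  exact h (hp.locally_ne_zero ((FormalMultilinearSeries.ofScalars_series_eq_zero 𝕜).not.2 hne))

theorem eq_zero_of_forall_cos_mul_sub_sin_mul_eq_zero {n : ℕ} (hn : n ≠ 0) {α β : ℝ}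
    (h : ∀ θ ∈ Ioo 0 π, cos (n * θ) * α - sin (n * θ) * β = 0) : α = 0 ∧ β = 0 := by
  have hn1 : (1 : ℝ) ≤ n := Nat.one_le_cast.2 (Nat.pos_of_ne_zero hn)
  have hmem : ∀ k : ℝ, 1 < k → π / (k * n) ∈ Ioo 0 π := fun k hk =>
    ⟨by positivity, div_lt_self pi_pos (one_lt_mul_of_lt_of_le hk hn1)⟩
  have h2 := h _ (hmem 2 one_lt_two)
  have h4 := h _ (hmem 4 (by norm_num))
  rw [show n * (π / (2 * n)) = π / 2 by field_simp, cos_pi_div_two, sin_pi_div_two] at h2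
  rw [show n * (π / (4 * n)) = π / 4 by field_simp, cos_pi_div_four, sin_pi_div_four] at h4
  have hβ : β = 0 := by linarith
  subst hβ
  exact ⟨by simpa using h4, rfl⟩

section SliceEmbedding

variable {I : ℍ}

theorem Quaternion.mul_self_eq_neg_one_of_re_eq_zero (hre : I.re = 0) (hnorm : ‖I‖ = 1) :
    I * I = -1 := by
  rw [← sq, sq_eq_neg_normSq.2 hre, normSq_eq_norm_mul_self, hnorm, mul_one, coe_one]

theorem Quaternion.abs_re_le_norm (w : ℍ) : |w.re| ≤ ‖w‖ := by
  simpa [inner_def] using abs_real_inner_le_norm w 1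

theorem Quaternion.re_mul_comm_s3 (v w : ℍ) : (v * w).re = (w * v).re := by
  simp only [re_mul]; ring

theorem Quaternion.im_eq_zero_of_forall_re_mul_eq_zero {w : ℍ}
    (h : ∀ I : ℍ, I.re = 0 → ‖I‖ = 1 → (w * I).re = 0) : w.im = 0 := by
  by_contra hw
  have hpos : 0 < ‖w.im‖ := norm_pos_iff.2 hw
  have hsq : (w * w.im).re = -(‖w.im‖ * ‖w.im‖) := by
    nth_rw 1 [← Quaternion.re_add_im w]
    rw [add_mul, ← sq, Quaternion.im_sq, Quaternion.re_add, ← Quaternion.normSq_eq_norm_mul_self]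
    simp
  have := h (‖w.im‖⁻¹ • w.im) (by simp) (by simp [norm_smul, hpos.ne'])
  rw [mul_smul_comm, re_smul, hsq, smul_eq_mul] at this
  simp [hpos.ne'] at this

variable (hre : I.re = 0) (hnorm : ‖I‖ = 1)
include hre hnorm

def Quaternion.sliceEmbedding : ℂ →ₐ[ℝ] ℍ :=
  Complex.lift ⟨I, mul_self_eq_neg_one_of_re_eq_zero hre hnorm⟩

theorem Quaternion.sliceEmbedding_apply (z : ℂ) :
    sliceEmbedding hre hnorm z = z.re + z.im • I :=
  rfl

theorem Quaternion.im_sliceEmbedding (z : ℂ) : (sliceEmbedding hre hnorm z).im = z.im • I := by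
  rw [sliceEmbedding_apply]; ext <;> simp [hre]

theorem Quaternion.norm_sliceEmbedding (z : ℂ) : ‖sliceEmbedding hre hnorm z‖ = ‖z‖ := by
  have hcross : ((z.re : ℍ) * star (z.im • I)).re = 0 := by simp [hre]
  have hsq : ‖sliceEmbedding hre hnorm z‖ ^ 2 = ‖z‖ ^ 2 := by
    rw [sq, ← Quaternion.normSq_eq_norm_mul_self, sliceEmbedding_apply, Quaternion.normSq_add,
      hcross, Quaternion.normSq_coe, Quaternion.normSq_smul, Quaternion.normSq_eq_norm_mul_self I,
      hnorm, Complex.sq_norm, Complex.normSq_apply]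
    ring
  exact (sq_eq_sq₀ (norm_nonneg _) (norm_nonneg _)).1 hsq

theorem Quaternion.re_sliceEmbedding_mul_mul (z : ℂ) (w : ℍ) :
    (sliceEmbedding hre hnorm z * w * I).re = z.re * (w * I).re - z.im * w.re := by
  have hIwI : (I * w * I).re = -w.re := by
    rw [mul_assoc, Quaternion.re_mul_comm_s3, mul_assoc, mul_self_eq_neg_one_of_re_eq_zero hre hnorm]
    simp
  rw [sliceEmbedding_apply, add_mul, add_mul, smul_mul_assoc, smul_mul_assoc, Quaternion.re_add,
    Quaternion.re_smul, hIwI]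
  simp [sub_eq_add_neg, mul_assoc]

end SliceEmbedding

section SliceRegular

variable {a : ℕ → ℍ} (hconv : ∀ ρ : ℝ, 0 ≤ ρ → ρ < 1 → Summable fun n : ℕ => ‖a n‖ * ρ ^ n)
include hconv

theorem summable_pow_mul_of_norm_lt_one {q : ℍ} (hq : ‖q‖ < 1) :
    Summable fun n => q ^ n * a n :=
  .of_norm <| by simpa [norm_mul, mul_comm] using hconv ‖q‖ (norm_nonneg q) hq

variable (h : ∀ q : ℍ, ‖q‖ < 1 → q.im ≠ 0 →
      ((∑' n : ℕ, q ^ n * a n) * (‖q.im‖⁻¹ • q.im)).re = 0)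
  {I : ℍ} (hre : I.re = 0) (hnorm : ‖I‖ = 1)
include h hre hnorm

theorem tsum_re_sliceEmbedding_pow_mul_mul_eq_zero {z : ℂ} (hz : ‖z‖ < 1) (hz_im : 0 < z.im) :
    ∑' n, (Quaternion.sliceEmbedding hre hnorm z ^ n * a n * I).re = 0 := by
  set q := Quaternion.sliceEmbedding hre hnorm z
  have hq : ‖q‖ < 1 := by rwa [Quaternion.norm_sliceEmbedding]
  have hq_im : q.im = z.im • I := Quaternion.im_sliceEmbedding hre hnorm z
  have hq_im_ne : q.im ≠ 0 := by
    rw [hq_im]; exact smul_ne_zero hz_im.ne' (by rintro rfl; simp at hnorm)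
  have hunit : ‖q.im‖⁻¹ • q.im = I := by
    rw [hq_im, norm_smul, hnorm, mul_one, Real.norm_of_nonneg hz_im.le, smul_smul,
      inv_mul_cancel₀ hz_im.ne', one_smul]
  have hs := summable_pow_mul_of_norm_lt_one hconv hq
  have := h q hq hq_im_ne
  rw [hunit, ← hs.tsum_mul_right] at this
  exact ((hs.mul_right I).hasSum.map (QuaternionAlgebra.reₗ _ _ _)
    Quaternion.continuous_re).tsum_eq.trans this

theorem re_sliceEmbedding_pow_mul_mul_eq_zero {u : ℂ} (hu : ‖u‖ = 1) (hu_im : 0 < u.im)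
    (n : ℕ) : (Quaternion.sliceEmbedding hre hnorm u ^ n * a n * I).re = 0 := by
  set b : ℕ → ℝ := fun k => (Quaternion.sliceEmbedding hre hnorm u ^ k * a k * I).re
  have hb_le : ∀ k, ‖b k‖ ≤ ‖a k‖ := fun k => by
    refine (Quaternion.abs_re_le_norm _).trans_eq ?_
    rw [norm_mul, norm_mul, norm_pow, Quaternion.norm_sliceEmbedding, hu, hnorm, one_pow, one_mul,
      mul_one]
  have hb_summable : Summable fun k => ‖b k‖ * (1 / 2 : ℝ) ^ k :=
    (hconv (1 / 2) (by norm_num) (by norm_num)).of_nonneg_of_le (fun k => by positivity)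
      fun k => by gcongr; exact hb_le k
  have hb_tsum : ∀ t ∈ Ioo (0 : ℝ) 1, ∑' k, b k * t ^ k = 0 := by
    rintro t ⟨ht0, ht1⟩
    have hz : ‖(t : ℂ) * u‖ < 1 := by
      rwa [norm_mul, hu, mul_one, Complex.norm_of_nonneg ht0.le]
    have hz_im : 0 < ((t : ℂ) * u).im := by simpa using mul_pos ht0 hu_im
    have hσ : Quaternion.sliceEmbedding hre hnorm (t * u) =
        t • Quaternion.sliceEmbedding hre hnorm u := by
      rw [← Complex.real_smul, map_smul]
    rw [← tsum_re_sliceEmbedding_pow_mul_mul_eq_zero hconv h hre hnorm hz hz_im]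
    congr 1 with k
    rw [hσ, smul_pow, smul_mul_assoc, smul_mul_assoc, Quaternion.re_smul, smul_eq_mul, mul_comm]
  have hfreq : ∃ᶠ t in 𝓝[≠] (0 : ℝ), ∑' k, b k * t ^ k = 0 :=
    (eventually_of_mem (Ioo_mem_nhdsGT one_pos) hb_tsum).frequently.filter_mono
      (nhdsGT_le_nhdsNE 0)
  exact congrFun (eq_zero_of_frequently_tsum_mul_pow_eq_zero (by norm_num) hb_summable hfreq) n

theorem cos_mul_re_mul_sub_sin_mul_re_eq_zero (n : ℕ) {θ : ℝ} (hθ : θ ∈ Ioo 0 π) :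
    cos (n * θ) * (a n * I).re - sin (n * θ) * (a n).re = 0 := by
  have hu_im : 0 < (Complex.exp (θ * Complex.I)).im := by
    rw [Complex.exp_ofReal_mul_I_im]; exact sin_pos_of_pos_of_lt_pi hθ.1 hθ.2
  have := re_sliceEmbedding_pow_mul_mul_eq_zero hconv h hre hnorm
    (Complex.norm_exp_ofReal_mul_I θ) hu_im n
  rwa [← map_pow, ← Complex.exp_nat_mul, Quaternion.re_sliceEmbedding_mul_mul, ← mul_assoc,
    ← Complex.ofReal_natCast, ← Complex.ofReal_mul, Complex.exp_ofReal_mul_I_re,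
    Complex.exp_ofReal_mul_I_im] at this

end SliceRegular

/-- If a slice regular function `g(q) = ∑ q^n a_n` on the unit ball satisfies
`Im_{I_q}(g(q)) = 0` (i.e. `Re(g(q) · I_q) = 0`) for every nonreal `q` in the ball,
then `g` is a real constant: `a₀ ∈ ℝ` and `a_n = 0` for all `n ≥ 1`. -/
theorem im_slice_zero_implies_real_constant (a : ℕ → ℍ)
    (hconv : ∀ ρ : ℝ, 0 ≤ ρ → ρ < 1 → Summable fun n : ℕ => ‖a n‖ * ρ ^ n)
    (h : ∀ q : ℍ, ‖q‖ < 1 → q.im ≠ 0 →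
      ((∑' n : ℕ, q ^ n * a n) * (‖q.im‖⁻¹ • q.im)).re = 0) :
    (a 0).im = 0 ∧ ∀ n : ℕ, 1 ≤ n → a n = 0 := by
  have hcoeff : ∀ I : ℍ, I.re = 0 → ‖I‖ = 1 → ∀ n : ℕ, ∀ θ ∈ Ioo 0 π,
      cos (n * θ) * (a n * I).re - sin (n * θ) * (a n).re = 0 :=
    fun I hre hnorm => cos_mul_re_mul_sub_sin_mul_re_eq_zero hconv h hre hnorm
  refine ⟨Quaternion.im_eq_zero_of_forall_re_mul_eq_zero fun I hre hnorm => ?_, fun n hn => ?_⟩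
  · simpa using hcoeff I hre hnorm 0 (π / 2) ⟨by positivity, by linarith [pi_pos]⟩
  have hcoeff_n : ∀ I : ℍ, I.re = 0 → ‖I‖ = 1 → (a n * I).re = 0 ∧ (a n).re = 0 :=
    fun I hre hnorm =>
      eq_zero_of_forall_cos_mul_sub_sin_mul_eq_zero (by omega) (hcoeff I hre hnorm n)
  have hi : ‖((Complex.I : ℂ) : ℍ)‖ = 1 := by
    rw [norm_eq_sqrt_real_inner, Quaternion.inner_self]; simp [Quaternion.normSq_def']
  rw [← Quaternion.re_add_im (a n), (hcoeff_n _ (by simp) hi).2,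
    Quaternion.im_eq_zero_of_forall_re_mul_eq_zero fun I hre hnorm => (hcoeff_n I hre hnorm).1]
  simp
end
end

section
/- Landau–Toeplitz inequalities for the regular n-diameter: Let n ≥ 2 be an integer and let f(q) = ∑_{m≥0} q^m a_m be a slice regular function on 𝔹 such that d̃_n(f(𝔹)) = d_n(𝔹). Then d̃_n(f(r𝔹)) ≤ d_n(r𝔹) = d_n(𝔹)·r for every r ∈ (0,1), and |a₁| ≤ 1 (i.e. |∂_c f(0)| ≤ 1). -/
noncomputable section

open Filter Metric Set ENNReal

local notation "ℍ" => Quaternion ℝ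

/-- Cauchy convolution of coefficient sequences (coefficients of the `*`-product). -/
def convH (b c : ℕ → ℍ) : ℕ → ℍ := fun m => ∑ i ∈ Finset.range (m + 1), b i * c (m - i)

/-- Coefficient sequence of the constant function `1` (identity for convolution). -/
def deltaH : ℕ → ℍ := fun m => if m = 0 then 1 else 0

/-- The pairs `(j,k)` with `j < k` in `Fin n`, listed in lexicographic order. -/
def pairList (n : ℕ) : List (Fin n × Fin n) :=
  (((List.finRange n).flatMap fun j => (List.finRange n).map fun k => (j, k)).filter
    fun p => decide (p.1 < p.2))

/-- The coefficient sequence of the `*`-product `∏*_{1≤j<k≤n} (f_{w_k} - f_{w_j})`,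
taken in lexicographic order on the pairs `(j,k)`: the `m`-th coefficient of each factor
`f_{w_k} - f_{w_j}` is `(w_k^m - w_j^m) a_m`, and the coefficients of the `*`-product are
the iterated ordered Cauchy convolutions. -/
def starCoeff (a : ℕ → ℍ) {n : ℕ} (w : Fin n → ℍ) : ℕ → ℍ :=
  (pairList n).foldr
    (fun p acc => convH (fun m => (w p.2 ^ m - w p.1 ^ m) * a m) acc) deltaH

/-- The regular `n`-diameter
`d̃_n(f(r𝔹)) = max_{w₁,…,w_n ∈ 𝔹̄} max_{|q| ≤ r} |(*-product)(q)|^{2/(n(n−1))}`. -/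
def regDiamN (n : ℕ) (a : ℕ → ℍ) (r : ℝ) : ℝ :=
  sSup {x : ℝ | ∃ w : Fin n → ℍ, (∀ i, ‖w i‖ ≤ 1) ∧ ∃ q : ℍ, ‖q‖ ≤ r ∧
    x = ‖∑' m : ℕ, q ^ m * starCoeff a w m‖ ^ (2 / ((n : ℝ) * ((n : ℝ) - 1)))}

/-- The `n`-diameter of a subset `E ⊆ ℍ`:
`d_n(E) = sup_{w₁,…,w_n ∈ E} (∏_{1 ≤ j < k ≤ n} |w_k − w_j|)^{2/(n(n−1))}`. -/
def nDiamReal (n : ℕ) (E : Set ℍ) : ℝ :=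
  sSup {x : ℝ | ∃ w : Fin n → ℍ, (∀ i, w i ∈ E) ∧
    x = (∏ p ∈ Finset.univ.filter (fun p : Fin n × Fin n => p.1 < p.2), ‖w p.2 - w p.1‖) ^
      (2 / ((n : ℝ) * ((n : ℝ) - 1)))}

/-! For `w` in the closed unit ball, the `*`-product `P_w(q) = ∑ qᵐ cₘ` of the `N = n(n-1)/2`
factors `f_{w_k} - f_{w_j}` vanishes to order `N` at `0`, since every factor has zero constant
term, and its `N`-th coefficient is the ordered product of the `(w_k - w_j) a₁`. On a complex slice
through `q` the maximum modulus principle applies, which gives a Schwarz lemma: for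
`|q| ≤ r < s < 1`, `|P_w(q)| ≤ (r/s)ᴺ max_{|p|=s} |P_w(p)| ≤ (r/s)ᴺ d̃_n(f(s𝔹))ᴺ`, and
`|c_N| ≤ d̃_n(f(s𝔹))ᴺ / sᴺ`. Taking `N`-th roots, `d̃_n(f(r𝔹)) ≤ (r/s) d̃_n(f(s𝔹))` and
`d_n(𝔹) |a₁| ≤ d̃_n(f(s𝔹)) / s`. Letting `s → 1`, where `d̃_n(f(s𝔹)) → d_n(𝔹) > 0`, and using
`d_n(r𝔹) = r d_n(𝔹)` gives both claims. -/

open scoped Topology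

theorem Quaternion.norm_coe_add_smul_of_re_eq_zero {I : ℍ} (hre : I.re = 0) (hI : ‖I‖ = 1)
    (x y : ℝ) : ‖(x : ℍ) + y • I‖ = ‖(⟨x, y⟩ : ℂ)‖ := by
  have hI' : normSq I = 1 := by rw [normSq_eq_norm_mul_self, hI, one_mul]
  have hcross : ((x : ℍ) * star (y • I)).re = 0 := by simp [hre]
  rw [← sq_eq_sq₀ (norm_nonneg _) (norm_nonneg _), sq, ← normSq_eq_norm_mul_self,
    Complex.sq_norm, normSq_add, normSq_coe, normSq_smul, hI', hcross, Complex.normSq_apply]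
  ring

theorem Quaternion.exists_unit_im_smul_eq (q : ℍ) :
    ∃ I : ℍ, I.re = 0 ∧ ‖I‖ = 1 ∧ ‖q.im‖ • I = q.im := by
  by_cases h : q.im = 0
  · refine ⟨(Complex.I : ℍ), by simp, ?_, by rw [h, norm_zero, zero_smul]⟩
    refine (pow_eq_one_iff_of_nonneg (norm_nonneg _) two_ne_zero).mp ?_
    rw [sq, ← normSq_eq_norm_mul_self]
    simp [normSq_def']
  · have h' : ‖q.im‖ ≠ 0 := norm_ne_zero_iff.mpr h
    refine ⟨‖q.im‖⁻¹ • q.im, by simp, ?_, ?_⟩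
    · rw [norm_smul, norm_inv, norm_norm, inv_mul_cancel₀ h']
    · rw [smul_smul, mul_inv_cancel₀ h', one_smul]

theorem Quaternion.exists_algHom_complex_isometry (q : ℍ) :
    ∃ φ : ℂ →ₐ[ℝ] ℍ, (∀ z, ‖φ z‖ = ‖z‖) ∧ q ∈ Set.range φ := by
  obtain ⟨I, hre, hI, hq⟩ := q.exists_unit_im_smul_eq
  have hII : I * I = -1 := by
    rw [← sq, sq_eq_neg_normSq.mpr hre, normSq_eq_norm_mul_self, hI]; simp
  refine ⟨Complex.liftAux I hII, fun z => ?_, ⟨q.re, ‖q.im‖⟩, ?_⟩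
  · rw [Complex.liftAux_apply, ← norm_coe_add_smul_of_re_eq_zero hre hI]; rfl
  · rw [Complex.liftAux_apply]
    simp [hq]

theorem Quaternion.norm_tsum_pow_mul_le_of_forall_norm_eq {c : ℕ → ℍ} {ρ s M : ℝ} (hs : 0 < s)
    (hsρ : s < ρ) (hc : Summable fun m => ‖c m‖ * ρ ^ m)
    (hM : ∀ p : ℍ, ‖p‖ = s → ‖∑' m, p ^ m * c m‖ ≤ M) {q : ℍ} (hq : ‖q‖ ≤ s) :
    ‖∑' m, q ^ m * c m‖ ≤ M := by
  obtain ⟨φ, hφ, z, rfl⟩ := q.exists_algHom_complex_isometry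
  -- Through the isometric slice `φ`, `ℍ` becomes a complex normed space, so the complex maximum
  -- modulus principle applies to `z ↦ ∑ φ(z)ᵐ cₘ`.
  let : Module ℂ ℍ := Module.compHom ℍ φ.toRingHom
  let : NormedSpace ℂ ℍ := ⟨fun w x => by
    change ‖φ w * x‖ ≤ _
    rw [norm_mul, hφ]⟩
  let F : FormalMultilinearSeries ℂ ℂ ℍ := fun k =>
    ContinuousMultilinearMap.mkPiRing ℂ (Fin k) (c k)
  have hρ : ENNReal.ofReal ρ ≤ F.radius := by
    refine F.le_radius_of_summable_norm ?_
    simpa [F, ContinuousMultilinearMap.norm_mkPiRing, Real.coe_toNNReal _ (hs.trans hsρ).le]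
      using hc
  have hsum : ∀ x : ℂ, ‖x‖ < ρ → F.sum x = ∑' m, φ x ^ m * c m := by
    intro x hx
    refine tsum_congr fun k => ?_
    change ContinuousMultilinearMap.mkPiRing ℂ (Fin k) (c k) (fun _ => x) = _
    rw [ContinuousMultilinearMap.mkPiRing_apply, Finset.prod_const, Finset.card_univ,
      Fintype.card_fin]
    change φ (x ^ k) * c k = _
    rw [map_pow]
  have hdiff : DifferentiableOn ℂ (fun x => ∑' m, φ x ^ m * c m) (ball 0 ρ) := by
    have hF := F.hasFPowerSeriesOnBall ((ENNReal.ofReal_pos.mpr (hs.trans hsρ)).trans_le hρ)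
    refine (hF.differentiableOn.mono ?_).congr fun x hx => (hsum x (mem_ball_zero_iff.mp hx)).symm
    rw [← Metric.eball_ofReal]
    exact eball_subset_eball hρ
  refine Complex.norm_le_of_forall_mem_frontier_norm_le (U := ball 0 s) isBounded_ball
    (hdiff.diffContOnCl_ball (closedBall_subset_ball hsρ)) (fun x hx => ?_) ?_
  · rw [frontier_ball 0 hs.ne', mem_sphere_zero_iff_norm] at hx
    exact hM _ (by rw [hφ, hx])
  · rw [closure_ball 0 hs.ne', mem_closedBall_zero_iff, ← hφ]
    exact hq

section PowerSeries

variable {R : Type*} [NormedDivisionRing R] {c : ℕ → R} {ρ : ℝ}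

theorem norm_pow_mul_le_of_norm_le {q : R} (hq : ‖q‖ ≤ ρ) (m : ℕ) :
    ‖q ^ m * c m‖ ≤ ‖c m‖ * ρ ^ m := by
  rw [norm_mul, norm_pow, mul_comm]
  exact mul_le_mul_of_nonneg_left (pow_le_pow_left₀ (norm_nonneg _) hq m) (norm_nonneg _)

theorem summable_norm_pow_mul (hc : Summable fun m => ‖c m‖ * ρ ^ m) {q : R} (hq : ‖q‖ ≤ ρ) :
    Summable fun m => ‖q ^ m * c m‖ :=
  hc.of_nonneg_of_le (fun _ => norm_nonneg _) (norm_pow_mul_le_of_norm_le hq)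

theorem norm_tsum_pow_mul_le (hc : Summable fun m => ‖c m‖ * ρ ^ m) {q : R} (hq : ‖q‖ ≤ ρ) :
    ‖∑' m, q ^ m * c m‖ ≤ ∑' m, ‖c m‖ * ρ ^ m :=
  (norm_tsum_le_tsum_norm (summable_norm_pow_mul hc hq)).trans
    ((summable_norm_pow_mul hc hq).tsum_le_tsum (norm_pow_mul_le_of_norm_le hq) hc)

theorem summable_norm_mul_pow_of_le (hc : Summable fun m => ‖c m‖ * ρ ^ m) {s : ℝ} (hs : 0 ≤ s)
    (hsρ : s ≤ ρ) : Summable fun m => ‖c m‖ * s ^ m :=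
  hc.of_nonneg_of_le (fun _ => by positivity) fun m => by gcongr

theorem summable_norm_add_mul_pow (hρ : 0 < ρ) (hc : Summable fun m => ‖c m‖ * ρ ^ m) (N : ℕ) :
    Summable fun m => ‖c (m + N)‖ * ρ ^ m := by
  refine (((summable_nat_add_iff N).mpr hc).mul_right (ρ ^ N)⁻¹).congr fun m => ?_
  field_simp
  ring

theorem tsum_pow_mul_eq_pow_mul_tsum_add {N : ℕ} (hc0 : ∀ m < N, c m = 0) {q : R}
    (hsum : Summable fun m => q ^ m * c m) :
    ∑' m, q ^ m * c m = q ^ N * ∑' m, q ^ m * c (m + N) := by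
  rw [← hsum.sum_add_tsum_nat_add N, Finset.sum_eq_zero fun i hi => by
    rw [hc0 i (Finset.mem_range.mp hi), mul_zero], zero_add, ← tsum_mul_left]
  exact tsum_congr fun m => by rw [pow_add, pow_mul_comm, mul_assoc]

end PowerSeries

section Schwarz

variable {c : ℕ → ℍ} {ρ : ℝ}

theorem Quaternion.norm_tsum_pow_mul_add_le {N : ℕ} (hc0 : ∀ m < N, c m = 0) {s M : ℝ}
    (hs : 0 < s) (hsρ : s < ρ) (hc : Summable fun m => ‖c m‖ * ρ ^ m)
    (hM : ∀ p : ℍ, ‖p‖ = s → ‖∑' m, p ^ m * c m‖ ≤ M) {q : ℍ} (hq : ‖q‖ ≤ s) :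
    ‖∑' m, q ^ m * c (m + N)‖ ≤ M / s ^ N := by
  refine Quaternion.norm_tsum_pow_mul_le_of_forall_norm_eq hs hsρ
    (summable_norm_add_mul_pow (hs.trans hsρ) hc N) (fun p hp => ?_) hq
  have hMp := hM p hp
  rw [tsum_pow_mul_eq_pow_mul_tsum_add hc0 (summable_norm_pow_mul hc (hp.trans_le hsρ.le)).of_norm,
    norm_mul, norm_pow, hp] at hMp
  rwa [le_div_iff₀ (by positivity), mul_comm]

theorem Quaternion.norm_tsum_pow_mul_le_of_vanishing {N : ℕ} (hc0 : ∀ m < N, c m = 0) {s M : ℝ}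
    (hs : 0 < s) (hsρ : s < ρ) (hc : Summable fun m => ‖c m‖ * ρ ^ m)
    (hM : ∀ p : ℍ, ‖p‖ = s → ‖∑' m, p ^ m * c m‖ ≤ M) {q : ℍ} (hq : ‖q‖ ≤ s) :
    ‖∑' m, q ^ m * c m‖ ≤ ‖q‖ ^ N * (M / s ^ N) := by
  rw [tsum_pow_mul_eq_pow_mul_tsum_add hc0
    (summable_norm_pow_mul hc (hq.trans hsρ.le)).of_norm, norm_mul, norm_pow]
  exact mul_le_mul_of_nonneg_left (norm_tsum_pow_mul_add_le hc0 hs hsρ hc hM hq) (by positivity)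

theorem Quaternion.norm_coeff_le_of_vanishing {N : ℕ} (hc0 : ∀ m < N, c m = 0) {s M : ℝ}
    (hs : 0 < s) (hsρ : s < ρ) (hc : Summable fun m => ‖c m‖ * ρ ^ m)
    (hM : ∀ p : ℍ, ‖p‖ = s → ‖∑' m, p ^ m * c m‖ ≤ M) :
    ‖c N‖ ≤ M / s ^ N := by
  have h := norm_tsum_pow_mul_add_le hc0 hs hsρ hc hM (q := 0) (by simpa using hs.le)
  rwa [tsum_eq_single 0 fun m hm => by rw [zero_pow hm, zero_mul], pow_zero, one_mul,
    zero_add] at h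

end Schwarz

section Convolution

variable {b c : ℕ → ℍ} {ρ : ℝ}

theorem norm_convH_mul_pow_le (hρ : 0 ≤ ρ) (m : ℕ) :
    ‖convH b c m‖ * ρ ^ m ≤
      ∑ i ∈ Finset.range (m + 1), ‖b i‖ * ρ ^ i * (‖c (m - i)‖ * ρ ^ (m - i)) := by
  refine (mul_le_mul_of_nonneg_right (norm_sum_le _ _) (pow_nonneg hρ m)).trans ?_
  rw [Finset.sum_mul]
  refine Finset.sum_le_sum fun i hi => ?_
  have him : i + (m - i) = m := Nat.add_sub_cancel' (Nat.lt_succ_iff.mp (Finset.mem_range.mp hi))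
  calc ‖b i * c (m - i)‖ * ρ ^ m ≤ ‖b i‖ * ‖c (m - i)‖ * ρ ^ (i + (m - i)) := by
        rw [him]; gcongr; exact norm_mul_le _ _
    _ = _ := by ring

theorem hasSum_convH_majorant (hb : Summable fun m => ‖b m‖ * ρ ^ m)
    (hc : Summable fun m => ‖c m‖ * ρ ^ m) :
    HasSum (fun m => ∑ i ∈ Finset.range (m + 1), ‖b i‖ * ρ ^ i * (‖c (m - i)‖ * ρ ^ (m - i)))
      ((∑' m, ‖b m‖ * ρ ^ m) * ∑' m, ‖c m‖ * ρ ^ m) :=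
  hasSum_sum_range_mul_of_summable_norm (f := fun m => ‖b m‖ * ρ ^ m)
    (g := fun m => ‖c m‖ * ρ ^ m) hb.abs hc.abs

theorem summable_norm_convH_mul_pow (hρ : 0 ≤ ρ) (hb : Summable fun m => ‖b m‖ * ρ ^ m)
    (hc : Summable fun m => ‖c m‖ * ρ ^ m) :
    Summable fun m => ‖convH b c m‖ * ρ ^ m :=
  (hasSum_convH_majorant hb hc).summable.of_nonneg_of_le (fun _ => by positivity)
    (norm_convH_mul_pow_le hρ)

theorem tsum_norm_convH_mul_pow_le (hρ : 0 ≤ ρ) (hb : Summable fun m => ‖b m‖ * ρ ^ m)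
    (hc : Summable fun m => ‖c m‖ * ρ ^ m) :
    ∑' m, ‖convH b c m‖ * ρ ^ m ≤ (∑' m, ‖b m‖ * ρ ^ m) * ∑' m, ‖c m‖ * ρ ^ m :=
  ((summable_norm_convH_mul_pow hρ hb hc).tsum_le_tsum (norm_convH_mul_pow_le hρ)
    (hasSum_convH_majorant hb hc).summable).trans_eq (hasSum_convH_majorant hb hc).tsum_eq

theorem convH_eq_zero_of_lt (hb : b 0 = 0) {K : ℕ} (hc : ∀ j < K, c j = 0) {m : ℕ}
    (hm : m < K + 1) : convH b c m = 0 := by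
  refine Finset.sum_eq_zero fun i hi => ?_
  rcases Nat.eq_zero_or_pos i with rfl | hi0
  · rw [hb, zero_mul]
  · rw [hc _ (by have := Finset.mem_range.mp hi; omega), mul_zero]

theorem convH_add_one_eq (hb : b 0 = 0) {K : ℕ} (hc : ∀ j < K, c j = 0) :
    convH b c (K + 1) = b 1 * c K := by
  rw [convH, Finset.sum_eq_single 1 (fun i hi hi1 => ?_) (by simp)]
  · rfl
  rcases Nat.eq_zero_or_pos i with rfl | hi0
  · rw [hb, zero_mul]
  · rw [hc _ (by have := Finset.mem_range.mp hi; omega), mul_zero]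

variable {α : Type*} (F : α → ℕ → ℍ)

theorem foldr_convH_summable_and_tsum_le (hρ : 0 ≤ ρ) {K : ℝ} :
    ∀ L : List α, (∀ p ∈ L, Summable (fun m => ‖F p m‖ * ρ ^ m) ∧
      ∑' m, ‖F p m‖ * ρ ^ m ≤ K) →
    Summable (fun m => ‖L.foldr (fun p acc => convH (F p) acc) deltaH m‖ * ρ ^ m) ∧
      ∑' m, ‖L.foldr (fun p acc => convH (F p) acc) deltaH m‖ * ρ ^ m ≤ K ^ L.length
  | [], _ => by
    have h : (fun m => ‖deltaH m‖ * ρ ^ m) = Pi.single 0 1 := by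
      ext m; rcases eq_or_ne m 0 with rfl | hm <;> simp [deltaH, *]
    simp only [List.foldr_nil, h, List.length_nil, pow_zero]
    exact ⟨(hasSum_pi_single 0 1).summable, (hasSum_pi_single 0 1).tsum_eq.le⟩
  | p :: L, hF => by
    obtain ⟨hsum, hle⟩ := hF p List.mem_cons_self
    obtain ⟨ihsum, ihle⟩ :=
      foldr_convH_summable_and_tsum_le hρ L fun q hq => hF q (List.mem_cons_of_mem p hq)
    refine ⟨summable_norm_convH_mul_pow hρ hsum ihsum,
      (tsum_norm_convH_mul_pow_le hρ hsum ihsum).trans ?_⟩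
    rw [List.length_cons, pow_succ']
    exact mul_le_mul hle ihle (tsum_nonneg fun _ => by positivity)
      ((tsum_nonneg fun _ => by positivity).trans hle)

theorem foldr_convH_eq_zero_of_lt (hF : ∀ p, F p 0 = 0) :
    ∀ (L : List α) {m : ℕ}, m < L.length → L.foldr (fun p acc => convH (F p) acc) deltaH m = 0
  | [], _, hm => absurd hm (Nat.not_lt_zero _)
  | p :: L, _, hm => convH_eq_zero_of_lt (hF p)
      (fun _ hj => foldr_convH_eq_zero_of_lt hF L hj) hm

theorem foldr_convH_length (hF : ∀ p, F p 0 = 0) :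
    ∀ L : List α, L.foldr (fun p acc => convH (F p) acc) deltaH L.length =
      (L.map fun p => F p 1).prod
  | [] => by simp [deltaH]
  | p :: L => by
    rw [List.foldr_cons, List.length_cons, convH_add_one_eq (hF p)
      (fun _ hj => foldr_convH_eq_zero_of_lt F hF L hj), foldr_convH_length hF L]
    rfl

end Convolution

theorem pairList_nodup (n : ℕ) : (pairList n).Nodup :=
  ((List.nodup_finRange n).product (List.nodup_finRange n)).filter _

theorem pairList_toFinset (n : ℕ) :
    (pairList n).toFinset = Finset.univ.filter (fun p : Fin n × Fin n => p.1 < p.2) := by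
  ext p
  simp [pairList]

theorem card_filter_fst_lt_snd (n : ℕ) :
    (Finset.univ.filter (fun p : Fin n × Fin n => p.1 < p.2)).card = n.choose 2 := by
  simpa using Finset.card_product_filter_lt (s := (Finset.univ : Finset (Fin n)))

theorem pairList_length (n : ℕ) : (pairList n).length = n.choose 2 := by
  rw [← List.toFinset_card_of_nodup (pairList_nodup n), pairList_toFinset, card_filter_fst_lt_snd]

theorem two_div_mul_sub_one_eq_inv_choose_two (n : ℕ) :
    2 / ((n : ℝ) * ((n : ℝ) - 1)) = ((n.choose 2 : ℕ) : ℝ)⁻¹ := by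
  rw [Nat.cast_choose_two, inv_div]

def distProd {n : ℕ} (w : Fin n → ℍ) : ℝ :=
  ∏ p ∈ Finset.univ.filter (fun p : Fin n × Fin n => p.1 < p.2), ‖w p.2 - w p.1‖

section StarProduct

variable (a : ℕ → ℍ) {n : ℕ} (w : Fin n → ℍ)

theorem starCoeff_eq_zero_of_lt : ∀ m < n.choose 2, starCoeff a w m = 0 := fun _ hm =>
  foldr_convH_eq_zero_of_lt _ (fun _ => by simp) _ (by rwa [pairList_length])

theorem norm_starCoeff_choose_two :
    ‖starCoeff a w (n.choose 2)‖ = distProd w * ‖a 1‖ ^ n.choose 2 := by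
  rw [← pairList_length, starCoeff, foldr_convH_length _ (fun _ => by simp), List.norm_prod,
    List.map_map]
  simp only [Function.comp_def, pow_one, norm_mul]
  rw [List.prod_map_mul, List.map_const', List.prod_replicate, distProd, ← pairList_toFinset,
    List.prod_toFinset _ (pairList_nodup n)]

variable {a w} {ρ : ℝ}

theorem diffCoeff_summable_and_tsum_le {u v : ℍ} (hu : ‖u‖ ≤ 1) (hv : ‖v‖ ≤ 1) (hρ : 0 ≤ ρ)
    (ha : Summable fun m => ‖a m‖ * ρ ^ m) :
    Summable (fun m => ‖(v ^ m - u ^ m) * a m‖ * ρ ^ m) ∧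
      ∑' m, ‖(v ^ m - u ^ m) * a m‖ * ρ ^ m ≤ 2 * ∑' m, ‖a m‖ * ρ ^ m := by
  have hle : ∀ m, ‖(v ^ m - u ^ m) * a m‖ * ρ ^ m ≤ 2 * (‖a m‖ * ρ ^ m) := fun m => by
    rw [norm_mul, ← mul_assoc]
    gcongr
    calc ‖v ^ m - u ^ m‖ ≤ ‖v‖ ^ m + ‖u‖ ^ m := by
          rw [← norm_pow, ← norm_pow]; exact norm_sub_le _ _
      _ ≤ 2 := by
        linarith [pow_le_one₀ (n := m) (norm_nonneg v) hv, pow_le_one₀ (n := m) (norm_nonneg u) hu]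
  have hsum := (ha.mul_left 2).of_nonneg_of_le (fun _ => by positivity) hle
  exact ⟨hsum, (hsum.tsum_le_tsum hle (ha.mul_left 2)).trans_eq tsum_mul_left⟩

theorem starCoeff_summable_and_tsum_le (hw : ∀ i, ‖w i‖ ≤ 1) (hρ : 0 ≤ ρ)
    (ha : Summable fun m => ‖a m‖ * ρ ^ m) :
    Summable (fun m => ‖starCoeff a w m‖ * ρ ^ m) ∧
      ∑' m, ‖starCoeff a w m‖ * ρ ^ m ≤ (2 * ∑' m, ‖a m‖ * ρ ^ m) ^ n.choose 2 := by
  rw [← pairList_length]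
  exact foldr_convH_summable_and_tsum_le _ hρ _ fun p _ =>
    diffCoeff_summable_and_tsum_le (hw p.1) (hw p.2) hρ ha

end StarProduct

section NDiameter

variable {n : ℕ}

theorem distProd_nonneg (w : Fin n → ℍ) : 0 ≤ distProd w :=
  Finset.prod_nonneg fun _ _ => norm_nonneg _

theorem distProd_smul (w : Fin n → ℍ) (r : ℝ) :
    distProd (fun i => r • w i) = |r| ^ n.choose 2 * distProd w := by
  rw [distProd, distProd, ← card_filter_fst_lt_snd, ← Finset.prod_const, ← Finset.prod_mul_distrib]
  simp only [← smul_sub, norm_smul, Real.norm_eq_abs]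

theorem distProd_le {r : ℝ} {w : Fin n → ℍ} (hw : ∀ i, ‖w i‖ ≤ r) :
    distProd w ≤ (2 * r) ^ n.choose 2 := by
  rw [distProd, ← card_filter_fst_lt_snd, ← Finset.prod_const]
  exact Finset.prod_le_prod (fun _ _ => norm_nonneg _) fun p _ =>
    (norm_sub_le _ _).trans (by linarith [hw p.1, hw p.2])

theorem distProd_rpow_smul (hn : 2 ≤ n) (w : Fin n → ℍ) {r : ℝ} (hr : 0 ≤ r) :
    distProd (fun i => r • w i) ^ (2 / ((n : ℝ) * ((n : ℝ) - 1))) =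
      r * distProd w ^ (2 / ((n : ℝ) * ((n : ℝ) - 1))) := by
  rw [distProd_smul, abs_of_nonneg hr, Real.mul_rpow (by positivity) (distProd_nonneg w),
    two_div_mul_sub_one_eq_inv_choose_two, Real.pow_rpow_inv_natCast hr]
  exact (Nat.choose_pos hn).ne'

open scoped Pointwise in
theorem nDiamReal_ball (hn : 2 ≤ n) {r : ℝ} (hr : 0 < r) :
    nDiamReal n (ball 0 r) = nDiamReal n (ball 0 1) * r := by
  have hset : {x : ℝ | ∃ w : Fin n → ℍ, (∀ i, w i ∈ ball 0 r) ∧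
      x = distProd w ^ (2 / ((n : ℝ) * ((n : ℝ) - 1)))} =
      r • {x : ℝ | ∃ w : Fin n → ℍ, (∀ i, w i ∈ ball 0 1) ∧
        x = distProd w ^ (2 / ((n : ℝ) * ((n : ℝ) - 1)))} := by
    ext x
    rw [Set.mem_smul_set]
    constructor
    · rintro ⟨w, hw, rfl⟩
      refine ⟨_, ⟨fun i => r⁻¹ • w i, fun i => ?_, rfl⟩, ?_⟩
      · rw [mem_ball_zero_iff, norm_smul, norm_inv, Real.norm_of_nonneg hr.le,
          inv_mul_lt_iff₀ hr, mul_one]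
        exact mem_ball_zero_iff.mp (hw i)
      · rw [smul_eq_mul, ← distProd_rpow_smul hn _ hr.le]
        simp_rw [smul_smul, mul_inv_cancel₀ hr.ne', one_smul]
    · rintro ⟨_, ⟨w, hw, rfl⟩, rfl⟩
      refine ⟨fun i => r • w i, fun i => ?_, (distProd_rpow_smul hn _ hr.le).symm⟩
      rw [mem_ball_zero_iff, norm_smul, Real.norm_of_nonneg hr.le]
      exact mul_lt_of_lt_one_right hr (mem_ball_zero_iff.mp (hw i))
  rw [mul_comm, ← smul_eq_mul]
  exact (congrArg sSup hset).trans (Real.sSup_smul_of_nonneg hr.le _)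

theorem nDiamReal_ball_one_pos (hn : 2 ≤ n) : 0 < nDiamReal n (ball 0 1) := by
  have hn0 : (0 : ℝ) < n := by exact_mod_cast (by omega : 0 < n)
  set w : Fin n → ℍ := fun i => (((i : ℕ) : ℝ) / n : ℝ)
  have hw : ∀ i, w i ∈ ball 0 1 := fun i => by
    rw [mem_ball_zero_iff, Quaternion.norm_coe, Real.norm_of_nonneg (by positivity),
      div_lt_one hn0]
    exact_mod_cast i.2
  have hinj : Function.Injective w := fun i j h => by
    have := Quaternion.coe_injective h
    rw [div_left_inj' hn0.ne'] at this
    exact Fin.ext (by exact_mod_cast this)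
  have he : 0 ≤ 2 / ((n : ℝ) * ((n : ℝ) - 1)) := by
    rw [two_div_mul_sub_one_eq_inv_choose_two]; positivity
  refine lt_of_lt_of_le ?_ (le_csSup ⟨((2 : ℝ) ^ n.choose 2) ^ (2 / ((n : ℝ) * ((n : ℝ) - 1))),
    ?_⟩ ⟨w, hw, rfl⟩)
  · exact Real.rpow_pos_of_pos (Finset.prod_pos fun p hp => norm_pos_iff.mpr
      (sub_ne_zero.mpr (hinj.ne (Finset.mem_filter.mp hp).2.ne'))) _
  · rintro _ ⟨v, hv, rfl⟩
    refine Real.rpow_le_rpow (distProd_nonneg v) ?_ he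
    change distProd v ≤ _
    simpa using distProd_le (r := 1) (w := v) fun i => (mem_ball_zero_iff.mp (hv i)).le

end NDiameter

section RegularNDiameter

variable {a : ℕ → ℍ} {n : ℕ}

theorem regDiamN_nonneg (r : ℝ) : 0 ≤ regDiamN n a r :=
  Real.sSup_nonneg fun _ ⟨_, _, _, _, hx⟩ => hx ▸ Real.rpow_nonneg (norm_nonneg _) _

theorem rpow_norm_tsum_starCoeff_le_regDiamN {s : ℝ} (ha : Summable fun m => ‖a m‖ * s ^ m)
    {w : Fin n → ℍ} (hw : ∀ i, ‖w i‖ ≤ 1) {q : ℍ} (hq : ‖q‖ ≤ s) :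
    ‖∑' m, q ^ m * starCoeff a w m‖ ^ (2 / ((n : ℝ) * ((n : ℝ) - 1))) ≤ regDiamN n a s := by
  have hs : 0 ≤ s := (norm_nonneg q).trans hq
  refine le_csSup ⟨((2 * ∑' m, ‖a m‖ * s ^ m) ^ n.choose 2) ^ (2 / ((n : ℝ) * ((n : ℝ) - 1))),
    ?_⟩ ⟨w, hw, q, hq, rfl⟩
  rintro _ ⟨v, hv, p, hp, rfl⟩
  refine Real.rpow_le_rpow (norm_nonneg _) ?_ (by
    rw [two_div_mul_sub_one_eq_inv_choose_two]; positivity)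
  exact (norm_tsum_pow_mul_le (starCoeff_summable_and_tsum_le hv hs ha).1 hp).trans
    (starCoeff_summable_and_tsum_le hv hs ha).2

theorem norm_tsum_starCoeff_le_regDiamN_pow (hn : 2 ≤ n) {s : ℝ}
    (ha : Summable fun m => ‖a m‖ * s ^ m) {w : Fin n → ℍ} (hw : ∀ i, ‖w i‖ ≤ 1) {q : ℍ}
    (hq : ‖q‖ ≤ s) : ‖∑' m, q ^ m * starCoeff a w m‖ ≤ regDiamN n a s ^ n.choose 2 := by
  have h := rpow_norm_tsum_starCoeff_le_regDiamN ha hw hq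
  rwa [two_div_mul_sub_one_eq_inv_choose_two, Real.rpow_inv_le_iff_of_pos (norm_nonneg _)
    (regDiamN_nonneg s) (by exact_mod_cast Nat.choose_pos hn), Real.rpow_natCast] at h

theorem regDiamN_le_mul_div (hn : 2 ≤ n) {ρ r s : ℝ} (ha : Summable fun m => ‖a m‖ * ρ ^ m)
    (hr : 0 ≤ r) (hrs : r < s) (hsρ : s < ρ) :
    regDiamN n a r ≤ regDiamN n a s * (r / s) := by
  have hs : 0 < s := hr.trans_lt hrs
  have hR := regDiamN_nonneg (n := n) (a := a) s
  refine Real.sSup_le ?_ (by positivity)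
  rintro _ ⟨w, hw, q, hq, rfl⟩
  have hP := Quaternion.norm_tsum_pow_mul_le_of_vanishing (starCoeff_eq_zero_of_lt a w) hs hsρ
    (starCoeff_summable_and_tsum_le hw (hs.trans hsρ).le ha).1
    (fun p hp => norm_tsum_starCoeff_le_regDiamN_pow hn
      (summable_norm_mul_pow_of_le ha hs.le hsρ.le) hw hp.le) (hq.trans hrs.le)
  calc ‖∑' m, q ^ m * starCoeff a w m‖ ^ (2 / ((n : ℝ) * ((n : ℝ) - 1)))
      ≤ ((regDiamN n a s * (r / s)) ^ n.choose 2) ^ (2 / ((n : ℝ) * ((n : ℝ) - 1))) := by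
        refine Real.rpow_le_rpow (norm_nonneg _) (hP.trans ?_) (by
          rw [two_div_mul_sub_one_eq_inv_choose_two]; positivity)
        rw [mul_pow, div_pow, mul_div_assoc', mul_comm, mul_div_assoc]
        gcongr
    _ = regDiamN n a s * (r / s) := by
        rw [two_div_mul_sub_one_eq_inv_choose_two,
          Real.pow_rpow_inv_natCast (by positivity) (Nat.choose_pos hn).ne']

open scoped Pointwise in
theorem nDiamReal_ball_one_mul_norm_le (hn : 2 ≤ n) {ρ s : ℝ}
    (ha : Summable fun m => ‖a m‖ * ρ ^ m) (hs : 0 < s) (hsρ : s < ρ) :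
    nDiamReal n (ball 0 1) * ‖a 1‖ ≤ regDiamN n a s / s := by
  have hR := regDiamN_nonneg (n := n) (a := a) s
  rw [mul_comm, ← smul_eq_mul, nDiamReal, ← Real.sSup_smul_of_nonneg (norm_nonneg _)]
  refine Real.sSup_le ?_ (by positivity)
  rintro _ ⟨_, ⟨w, hw, rfl⟩, rfl⟩
  have hw' : ∀ i, ‖w i‖ ≤ 1 := fun i => (mem_ball_zero_iff.mp (hw i)).le
  have hc := Quaternion.norm_coeff_le_of_vanishing (starCoeff_eq_zero_of_lt a w) hs hsρ
    (starCoeff_summable_and_tsum_le hw' (hs.trans hsρ).le ha).1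
    (fun p hp => norm_tsum_starCoeff_le_regDiamN_pow hn
      (summable_norm_mul_pow_of_le ha hs.le hsρ.le) hw' hp.le)
  rw [norm_starCoeff_choose_two, ← div_pow] at hc
  have hN : n.choose 2 ≠ 0 := (Nat.choose_pos hn).ne'
  change ‖a 1‖ • distProd w ^ (2 / ((n : ℝ) * ((n : ℝ) - 1))) ≤ _
  calc ‖a 1‖ • distProd w ^ (2 / ((n : ℝ) * ((n : ℝ) - 1)))
      = (distProd w * ‖a 1‖ ^ n.choose 2) ^ (2 / ((n : ℝ) * ((n : ℝ) - 1))) := by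
        rw [smul_eq_mul, Real.mul_rpow (distProd_nonneg w) (by positivity),
          two_div_mul_sub_one_eq_inv_choose_two, Real.pow_rpow_inv_natCast (norm_nonneg _) hN,
          mul_comm]
    _ ≤ ((regDiamN n a s / s) ^ n.choose 2) ^ (2 / ((n : ℝ) * ((n : ℝ) - 1))) :=
        Real.rpow_le_rpow (by positivity [distProd_nonneg w]) hc (by
          rw [two_div_mul_sub_one_eq_inv_choose_two]; positivity)
    _ = regDiamN n a s / s := by
        rw [two_div_mul_sub_one_eq_inv_choose_two, Real.pow_rpow_inv_natCast (by positivity) hN]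

theorem regDiamN_le_mul_of_tendsto (hn : 2 ≤ n)
    (ha : ∀ ρ : ℝ, 0 ≤ ρ → ρ < 1 → Summable fun m => ‖a m‖ * ρ ^ m) {L : ℝ}
    (hd : Tendsto (regDiamN n a) (𝓝[<] 1) (𝓝 L)) {r : ℝ} (hr : r ∈ Ioo 0 1) :
    regDiamN n a r ≤ L * r := by
  have hlim : Tendsto (fun s => regDiamN n a s * (r / s)) (𝓝[<] 1) (𝓝 (L * r)) := by
    simpa using hd.mul (tendsto_const_nhds.div (tendsto_nhdsWithin_of_tendsto_nhds tendsto_id)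
      one_ne_zero)
  refine ge_of_tendsto hlim ?_
  filter_upwards [Ioo_mem_nhdsLT hr.2] with s hs
  obtain ⟨ρ, hsρ, hρ1⟩ := exists_between hs.2
  exact regDiamN_le_mul_div hn (ha ρ (hr.1.trans (hs.1.trans hsρ)).le hρ1) hr.1.le hs.1 hsρ

theorem nDiamReal_ball_one_mul_norm_le_of_tendsto (hn : 2 ≤ n)
    (ha : ∀ ρ : ℝ, 0 ≤ ρ → ρ < 1 → Summable fun m => ‖a m‖ * ρ ^ m) {L : ℝ}
    (hd : Tendsto (regDiamN n a) (𝓝[<] 1) (𝓝 L)) :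
    nDiamReal n (ball 0 1) * ‖a 1‖ ≤ L := by
  have hlim : Tendsto (fun s => regDiamN n a s / s) (𝓝[<] 1) (𝓝 (L / 1)) :=
    hd.div (tendsto_nhdsWithin_of_tendsto_nhds tendsto_id) one_ne_zero
  rw [div_one] at hlim
  refine ge_of_tendsto hlim ?_
  filter_upwards [Ioo_mem_nhdsLT one_pos] with s hs
  obtain ⟨ρ, hsρ, hρ1⟩ := exists_between hs.2
  exact nDiamReal_ball_one_mul_norm_le hn (ha ρ (hs.1.trans hsρ).le hρ1) hs.1 hsρ

end RegularNDiameter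

/-- Landau–Toeplitz inequalities for the regular `n`-diameter: if `d̃_n(f(𝔹)) = d_n(𝔹)`
then `d̃_n(f(r𝔹)) ≤ d_n(r𝔹) = d_n(𝔹)·r` for all `r ∈ (0,1)`, and `|∂_c f(0)| = |a₁| ≤ 1`. -/
theorem landau_toeplitz_nDiam (a : ℕ → ℍ)
    (hconv : ∀ ρ : ℝ, 0 ≤ ρ → ρ < 1 → Summable fun n : ℕ => ‖a n‖ * ρ ^ n)
    (n : ℕ) (hn : 2 ≤ n)
    (hd : Tendsto (regDiamN n a) (nhdsWithin 1 (Set.Iio 1))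
      (nhds (nDiamReal n (Metric.ball 0 1)))) :
    (∀ r ∈ Set.Ioo (0 : ℝ) 1,
        regDiamN n a r ≤ nDiamReal n (Metric.ball 0 r) ∧
        nDiamReal n (Metric.ball 0 r) = nDiamReal n (Metric.ball 0 1) * r) ∧
      ‖a 1‖ ≤ 1 := by
  refine ⟨fun r hr => ⟨?_, nDiamReal_ball hn hr.1⟩, ?_⟩
  · rw [nDiamReal_ball hn hr.1]
    exact regDiamN_le_mul_of_tendsto hn hconv hd hr
  · have h := nDiamReal_ball_one_mul_norm_le_of_tendsto hn hconv hd
    exact le_of_mul_le_mul_left (by rwa [mul_one]) (nDiamReal_ball_one_pos hn)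
end
end

section
/- Given an integer n ≥ 2 and n points w₁, …, w_n in the closed unit disc 𝔻̄ = {z ∈ ℂ : |z| ≤ 1}, one has ∏_{1≤j<k≤n} |w_j − w_k| ≤ n^{n/2}. -/
/-!
The product of the pairwise distances is the modulus of the Vandermonde determinant `det V`.
With `G = Vᴴ V`, `|det V|² = det G` is the product of the (nonnegative) eigenvalues of `G`,
and by AM-GM this is at most `(tr G / n)ⁿ`. Since `tr G = ∑ |w_i|^{2j} ≤ n²`, `|det V|² ≤ nⁿ`.
-/

open Finset
open scoped ComplexOrder

theorem Real.prod_le_sum_div_card_pow {ι : Type*} (s : Finset ι) (f : ι → ℝ)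
    (hf : ∀ i ∈ s, 0 ≤ f i) : ∏ i ∈ s, f i ≤ ((∑ i ∈ s, f i) / #s) ^ #s := by
  rcases s.eq_empty_or_nonempty with rfl | hs
  · simp
  have hcard : (0 : ℝ) < #s := by exact_mod_cast hs.card_pos
  have amgm := Real.geom_mean_le_arith_mean s (fun _ => 1) f (fun _ _ => zero_le_one)
    (by simpa using hcard) hf
  simp only [Real.rpow_one, sum_const, nsmul_eq_mul, mul_one, one_mul] at amgm
  calc ∏ i ∈ s, f i = ((∏ i ∈ s, f i) ^ (#s : ℝ)⁻¹) ^ #s := by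
        rw [← Real.rpow_mul_natCast (prod_nonneg hf), inv_mul_cancel₀ hcard.ne', Real.rpow_one]
    _ ≤ ((∑ i ∈ s, f i) / #s) ^ #s := by
        gcongr
        exact Real.rpow_nonneg (prod_nonneg hf) _

theorem Finset.prod_filter_lt_eq_prod_prod_Ioi {α M : Type*} [LinearOrder α] [Fintype α]
    [LocallyFiniteOrderTop α] [CommMonoid M] (f : α → α → M) :
    ∏ p ∈ univ.filter (fun p : α × α => p.1 < p.2), f p.1 p.2 = ∏ i, ∏ j ∈ Ioi i, f i j := by
  rw [prod_filter, Fintype.prod_prod_type]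
  simp only [← prod_filter, filter_lt_eq_Ioi]

namespace Matrix

variable {𝕜 m n : Type*} [RCLike 𝕜] [Fintype m] [Fintype n]

theorem trace_conjTranspose_mul_self (A : Matrix m n 𝕜) :
    (Aᴴ * A).trace = ((∑ i, ∑ j, ‖A i j‖ ^ 2 : ℝ) : 𝕜) := by
  simp only [trace, diag_apply, mul_apply, conjTranspose_apply, RCLike.star_def,
    RCLike.conj_mul]
  push_cast
  exact sum_comm

theorem det_conjTranspose_mul_self [DecidableEq n] (A : Matrix n n 𝕜) :
    (Aᴴ * A).det = ((‖A.det‖ ^ 2 : ℝ) : 𝕜) := by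
  rw [det_mul, det_conjTranspose, RCLike.star_def, RCLike.conj_mul]
  push_cast
  rfl

theorem norm_det_sq_le [DecidableEq n] (A : Matrix n n 𝕜) :
    ‖A.det‖ ^ 2 ≤ ((∑ i, ∑ j, ‖A i j‖ ^ 2) / Fintype.card n) ^ Fintype.card n := by
  have hG := (posSemidef_conjTranspose_mul_self A).isHermitian
  have hdet : ‖A.det‖ ^ 2 = ∏ i, hG.eigenvalues i := by
    exact_mod_cast (det_conjTranspose_mul_self A).symm.trans hG.det_eq_prod_eigenvalues
  have htrace : ∑ i, ∑ j, ‖A i j‖ ^ 2 = ∑ i, hG.eigenvalues i := by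
    exact_mod_cast (trace_conjTranspose_mul_self A).symm.trans hG.trace_eq_sum_eigenvalues
  rw [hdet, htrace]
  exact Real.prod_le_sum_div_card_pow _ _ fun i _ =>
    (posSemidef_conjTranspose_mul_self A).eigenvalues_nonneg i

theorem norm_det_sq_le_card_pow [DecidableEq n] {A : Matrix n n 𝕜} (hA : ∀ i j, ‖A i j‖ ≤ 1) :
    ‖A.det‖ ^ 2 ≤ (Fintype.card n : ℝ) ^ Fintype.card n := by
  refine (norm_det_sq_le A).trans (pow_le_pow_left₀ (by positivity) ?_ _)
  calc (∑ i, ∑ j, ‖A i j‖ ^ 2) / Fintype.card n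
      ≤ (∑ _i : n, ∑ _j : n, (1 : ℝ)) / Fintype.card n := by
        gcongr with i _ j _
        exact pow_le_one₀ (norm_nonneg _) (hA i j)
    _ = Fintype.card n := by simp [mul_self_div_self]

theorem norm_det_vandermonde {k : ℕ} (w : Fin k → 𝕜) :
    ‖(vandermonde w).det‖ =
      ∏ p ∈ univ.filter (fun p : Fin k × Fin k => p.1 < p.2), ‖w p.1 - w p.2‖ := by
  rw [det_vandermonde, prod_filter_lt_eq_prod_prod_Ioi (fun i j => ‖w i - w j‖), norm_prod]
  simp only [norm_prod, norm_sub_rev]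

theorem norm_det_vandermonde_sq_le {k : ℕ} {w : Fin k → 𝕜} (hw : ∀ i, ‖w i‖ ≤ 1) :
    ‖(vandermonde w).det‖ ^ 2 ≤ (k : ℝ) ^ k := by
  have hentries (i j : Fin k) : ‖vandermonde w i j‖ ≤ 1 := by
    rw [vandermonde_apply, norm_pow]
    exact pow_le_one₀ (norm_nonneg _) (hw i)
  simpa using norm_det_sq_le_card_pow hentries

end Matrix

theorem prod_dist_le_pow_general (n : ℕ) (w : Fin n → ℂ)
    (hw : ∀ i, ‖w i‖ ≤ 1) :
    (∏ p ∈ Finset.univ.filter (fun p : Fin n × Fin n => p.1 < p.2),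
        ‖w p.1 - w p.2‖) ≤ (n : ℝ) ^ ((n : ℝ) / 2) := by
  have hpow : ((n : ℝ) ^ ((n : ℝ) / 2)) ^ 2 = (n : ℝ) ^ n := by
    rw [← Real.rpow_mul_natCast (Nat.cast_nonneg n), Nat.cast_ofNat,
      div_mul_cancel₀ _ two_ne_zero, Real.rpow_natCast]
  rw [← Matrix.norm_det_vandermonde, ← pow_le_pow_iff_left₀ (norm_nonneg _) (by positivity)
    two_ne_zero, hpow]
  exact Matrix.norm_det_vandermonde_sq_le hw

/-- For `n ≥ 2` points `w₁, …, w_n` in the closed unit disc of `ℂ`,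
`∏_{1 ≤ j < k ≤ n} |w_j − w_k| ≤ n^{n/2}`. -/
theorem prod_dist_le_pow (n : ℕ) (hn : 2 ≤ n) (w : Fin n → ℂ)
    (hw : ∀ i, ‖w i‖ ≤ 1) :
    (∏ p ∈ Finset.univ.filter (fun p : Fin n × Fin n => p.1 < p.2),
        ‖w p.1 - w p.2‖) ≤ (n : ℝ) ^ ((n : ℝ) / 2) :=
  prod_dist_le_pow_general n w hw
end
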